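/- A singular function exists: there is a function f : [0,1] → ℝ that is continuous, non-constant with f(0) = 0 and f(1) = 1, monotone increasing, and whose derivative exists and equals 0 at Lebesgue-almost every point of [0,1]. In particular De Rham's function R_a for a ∈ (0,1), a ≠ 1/2, is such a function. -/

import Mathlib

open Real Filter Set MeasureTheory

/-- De Rham's function with parameter `a`: the unique continuous function on
`[0,1]` with `R 0 = 0`, `R 1 = 1` satisfying the two functional equations. -/
def IsDeRham (a : ℝ) (R : ℝ → ℝ) : Prop :=
  ContinuousOn R (Set.Icc (0:ℝ) 1) ∧ R 0 = 0 ∧ R 1 = 1 ∧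
  (∀ x : ℝ, 0 ≤ x → x < 1/2 → R x = a * R (2*x)) ∧
  (∀ x : ℝ, 1/2 ≤ x → x ≤ 1 → R x = (1 - a) * R (2*x - 1) + a)

/-- A singular function on `[0,1]`: continuous, monotone increasing,
non-constant with `f 0 = 0` and `f 1 = 1`, whose derivative exists and
equals `0` at Lebesgue-almost every point of `[0,1]`. -/
def IsSingularFunction (f : ℝ → ℝ) : Prop :=
  ContinuousOn f (Set.Icc (0:ℝ) 1) ∧ f 0 = 0 ∧ f 1 = 1 ∧
  MonotoneOn f (Set.Icc (0:ℝ) 1) ∧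
  ∀ᵐ x ∂(volume.restrict (Set.Icc (0:ℝ) 1)), HasDerivAt f 0 x

namespace Stmt19aux

open Topology

noncomputable def Δ (R : ℝ → ℝ) (n k : ℕ) : ℝ :=
  R (((k:ℝ)+1)/2^n) - R ((k:ℝ)/2^n)

variable {a : ℝ} {R : ℝ → ℝ}

lemma half_eq (hR : IsDeRham a R) : ∀ x : ℝ, 0 ≤ x → x ≤ 1/2 → R x = a * R (2*x) := by
  intro x hx0 hx
  rcases lt_or_eq_of_le hx with h | h
  · exact hR.2.2.2.1 x hx0 h
  · subst h
    rw [hR.2.2.2.2 (1/2) le_rfl (by norm_num)]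
    norm_num [hR.2.1, hR.2.2.1]

lemma delta_rec_lo (hR : IsDeRham a R) {n k : ℕ} (hk : k < 2^n) :
    Δ R (n+1) k = a * Δ R n k := by
  have h2 : (0:ℝ) < 2^n := by positivity
  have hkR : (k:ℝ) + 1 ≤ 2^n := by exact_mod_cast Nat.succ_le_of_lt hk
  have e1 : R (((k:ℝ)+1)/2^(n+1)) = a * R (((k:ℝ)+1)/2^n) := by
    have := half_eq hR (((k:ℝ)+1)/2^(n+1)) (by positivity)
      (by rw [div_le_div_iff₀ (by positivity) (by norm_num)]; push_cast [pow_succ]; nlinarith)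
    rw [this]; ring_nf
  have e2 : R ((k:ℝ)/2^(n+1)) = a * R ((k:ℝ)/2^n) := by
    have := half_eq hR ((k:ℝ)/2^(n+1)) (by positivity)
      (by rw [div_le_div_iff₀ (by positivity) (by norm_num)]; push_cast [pow_succ]; nlinarith)
    rw [this]; ring_nf
  have ha1 : 2 * (((k:ℝ)+1)/2^(n+1)) = ((k:ℝ)+1)/2^n := by
    field_simp [pow_succ]; ring
  have ha2 : 2 * ((k:ℝ)/2^(n+1)) = (k:ℝ)/2^n := by
    field_simp [pow_succ]; ring
  rw [Δ, Δ, ← ha1, ← ha2] at *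
  rw [e1, e2]; ring

lemma delta_rec_hi (hR : IsDeRham a R) {n k : ℕ} (hk1 : 2^n ≤ k) (hk2 : k < 2^(n+1)) :
    Δ R (n+1) k = (1-a) * Δ R n (k - 2^n) := by
  have h2 : (0:ℝ) < 2^n := by positivity
  have hk1R : (2:ℝ)^n ≤ (k:ℝ) := by exact_mod_cast hk1
  have hk2R : (k:ℝ) + 1 ≤ 2^(n+1) := by exact_mod_cast Nat.succ_le_of_lt hk2
  have hcast : ((k - 2^n : ℕ) : ℝ) = (k:ℝ) - 2^n := by
    push_cast [Nat.cast_sub hk1]; ring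
  have key : ∀ x : ℝ, (2:ℝ)^n ≤ x → x ≤ 2^(n+1) →
      R (x/2^(n+1)) = (1-a) * R ((x - 2^n)/2^n) + a := by
    intro x hx1 hx2
    have h12 : (1:ℝ)/2 ≤ x/2^(n+1) := by
      rw [div_le_div_iff₀ (by norm_num) (by positivity)]
      push_cast [pow_succ]; nlinarith
    have h1 : x/2^(n+1) ≤ 1 := by
      rw [div_le_one (by positivity)]; exact hx2
    have := hR.2.2.2.2 _ h12 h1
    rw [this]
    congr 2
    field_simp [pow_succ]; ring
  rw [Δ, Δ, hcast]
  rw [key ((k:ℝ)+1) (by linarith) hk2R, key (k:ℝ) hk1R (by linarith)]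
  ring

lemma delta_nonneg (hR : IsDeRham a R) (ha0 : 0 < a) (ha1 : a < 1) :
    ∀ n k, k < 2^n → 0 ≤ Δ R n k := by
  intro n
  induction n with
  | zero =>
    intro k hk
    interval_cases k
    simp [Δ, hR.2.1, hR.2.2.1]
  | succ n ih =>
    intro k hk
    rcases lt_or_ge k (2^n) with h | h
    · rw [delta_rec_lo hR h]
      exact mul_nonneg ha0.le (ih k h)
    · rw [delta_rec_hi hR h hk]
      refine mul_nonneg (by linarith) (ih _ ?_)
      omega

lemma dyadic_mono (hR : IsDeRham a R) (ha0 : 0 < a) (ha1 : a < 1) (n : ℕ) :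
    ∀ l : ℕ, l ≤ 2^n → ∀ k : ℕ, k ≤ l → R ((k:ℝ)/2^n) ≤ R ((l:ℝ)/2^n) := by
  intro l
  induction l with
  | zero => intro _ k hk; interval_cases k; rfl
  | succ l ih =>
    intro hl k hk
    rcases Nat.lt_or_ge k (l+1) with h | h
    · have h1 : R ((k:ℝ)/2^n) ≤ R ((l:ℝ)/2^n) :=
        ih (by omega) k (by omega)
      have h2 : 0 ≤ Δ R n l := delta_nonneg hR ha0 ha1 n l (by omega)
      rw [Δ] at h2
      have : ((l+1 : ℕ):ℝ) = (l:ℝ)+1 := by push_cast; ring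
      rw [this]; linarith
    · have : k = l+1 := by omega
      subst this; rfl

lemma sum_sqrt (hR : IsDeRham a R) (ha0 : 0 < a) (ha1 : a < 1) (n : ℕ) :
    ∑ k ∈ Finset.range (2^n), Real.sqrt (Δ R n k)
      = (Real.sqrt a + Real.sqrt (1-a))^n := by
  induction n with
  | zero => simp [Δ, hR.2.1, hR.2.2.1]
  | succ n ih =>
    have h2 : 2^(n+1) = 2^n + 2^n := by ring
    rw [h2, Finset.sum_range_add]
    have e1 : ∀ k ∈ Finset.range (2^n), Real.sqrt (Δ R (n+1) k)
        = Real.sqrt a * Real.sqrt (Δ R n k) := by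
      intro k hk
      rw [delta_rec_lo hR (Finset.mem_range.mp hk), Real.sqrt_mul ha0.le]
    have e2 : ∀ k ∈ Finset.range (2^n), Real.sqrt (Δ R (n+1) (2^n + k))
        = Real.sqrt (1-a) * Real.sqrt (Δ R n k) := by
      intro k hk
      have hk' := Finset.mem_range.mp hk
      rw [delta_rec_hi hR (by omega) (by rw [pow_succ]; omega),
        Real.sqrt_mul (by linarith)]
      have hkk : 2^n + k - 2^n = k := by omega
      rw [hkk]
    rw [Finset.sum_congr rfl e1, Finset.sum_congr rfl e2,
      ← Finset.mul_sum, ← Finset.mul_sum, ih, pow_succ]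
    ring

lemma mono_of_dyadic {R : ℝ → ℝ} (hcont : ContinuousOn R (Set.Icc (0:ℝ) 1))
    (hdy : ∀ n : ℕ, ∀ l : ℕ, l ≤ 2^n → ∀ k : ℕ, k ≤ l → R ((k:ℝ)/2^n) ≤ R ((l:ℝ)/2^n)) :
    MonotoneOn R (Set.Icc (0:ℝ) 1) := by
  intro x hx y hy hxy
  rcases eq_or_lt_of_le hxy with rfl | hlt
  · rfl
  -- sequences
  set p : ℕ → ℝ := fun n => (⌈(2:ℝ)^n * x⌉₊ : ℝ)/2^n with hp
  set q : ℕ → ℝ := fun n => (⌊(2:ℝ)^n * y⌋₊ : ℝ)/2^n with hq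
  have h2 : ∀ n : ℕ, (0:ℝ) < 2^n := fun n => by positivity
  have hx0 : (0:ℝ) ≤ x := hx.1
  have hy1 : y ≤ 1 := hy.2
  have hy0 : (0:ℝ) ≤ y := hy.1
  have hpx : ∀ n, x ≤ p n := by
    intro n
    rw [hp, le_div_iff₀ (h2 n)]
    calc x * 2^n = 2^n * x := by ring
    _ ≤ _ := Nat.le_ceil _
  have hpb : ∀ n, p n ≤ x + 1/2^n := by
    intro n
    rw [hp, div_le_iff₀ (h2 n)]
    have := (Nat.ceil_lt_add_one (by positivity : (0:ℝ) ≤ 2^n * x)).le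
    calc (⌈(2:ℝ)^n * x⌉₊ : ℝ) ≤ 2^n * x + 1 := this
    _ = (x + 1/2^n) * 2^n := by field_simp
  have hqy : ∀ n, q n ≤ y := by
    intro n
    rw [hq, div_le_iff₀ (h2 n)]
    calc (⌊(2:ℝ)^n * y⌋₊ : ℝ) ≤ 2^n * y := Nat.floor_le (by positivity)
    _ = y * 2^n := by ring
  have hqb : ∀ n, y - 1/2^n ≤ q n := by
    intro n
    rw [hq, le_div_iff₀ (h2 n)]
    have h3 := (Nat.lt_floor_add_one ((2:ℝ)^n * y)).le
    have h4 : (1/2^n : ℝ) * 2^n = 1 := by field_simp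
    nlinarith [h3, h2 n, h4]
  have htp : Tendsto p atTop (𝓝 x) := by
    have h0 : Tendsto (fun n : ℕ => x + 1/2^n) atTop (𝓝 x) := by
      have : Tendsto (fun n : ℕ => (1:ℝ)/2^n) atTop (𝓝 0) := by
        simpa [one_div] using tendsto_pow_atTop_nhds_zero_of_lt_one
          (by norm_num : (0:ℝ) ≤ 1/2) (by norm_num : (1:ℝ)/2 < 1) |>.congr (fun n => by
            rw [div_pow]; norm_num)
      simpa using tendsto_const_nhds.add this
    exact tendsto_of_tendsto_of_tendsto_of_le_of_le tendsto_const_nhds h0 hpx hpb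
  have htq : Tendsto q atTop (𝓝 y) := by
    have h0 : Tendsto (fun n : ℕ => y - 1/2^n) atTop (𝓝 y) := by
      have : Tendsto (fun n : ℕ => (1:ℝ)/2^n) atTop (𝓝 0) := by
        simpa [one_div] using tendsto_pow_atTop_nhds_zero_of_lt_one
          (by norm_num : (0:ℝ) ≤ 1/2) (by norm_num : (1:ℝ)/2 < 1) |>.congr (fun n => by
            rw [div_pow]; norm_num)
      simpa using tendsto_const_nhds.sub this
    exact tendsto_of_tendsto_of_tendsto_of_le_of_le h0 tendsto_const_nhds hqb hqy
  -- eventually p n ≤ q n (as dyadics) and the R inequality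
  have hev : ∀ᶠ n in atTop, R (p n) ≤ R (q n) := by
    have hev2 : ∀ᶠ n in atTop, (1:ℝ)/2^n < y - x := by
      have : Tendsto (fun n : ℕ => (1:ℝ)/2^n) atTop (𝓝 0) := by
        simpa [one_div] using tendsto_pow_atTop_nhds_zero_of_lt_one
          (by norm_num : (0:ℝ) ≤ 1/2) (by norm_num : (1:ℝ)/2 < 1) |>.congr (fun n => by
            rw [div_pow]; norm_num)
      exact this.eventually_lt_const (by linarith)
    filter_upwards [hev2] with n hn
    have hkl : ⌈(2:ℝ)^n * x⌉₊ ≤ ⌊(2:ℝ)^n * y⌋₊ := by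
      apply Nat.le_floor
      calc (⌈(2:ℝ)^n * x⌉₊ : ℝ) ≤ 2^n * x + 1 := (Nat.ceil_lt_add_one (by positivity)).le
      _ ≤ 2^n * y := by
        have := h2 n
        have h1 : (1:ℝ) ≤ 2^n * (y - x) := by
          rw [div_lt_iff₀ (h2 n)] at hn; nlinarith
        nlinarith
    have hl2 : ⌊(2:ℝ)^n * y⌋₊ ≤ 2^n := by
      have h5 : (2:ℝ)^n * y ≤ ((2^n : ℕ) : ℝ) := by push_cast; nlinarith [h2 n]
      have := Nat.floor_le_of_le h5
      simpa using this
    exact hdy n _ hl2 _ hkl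
  -- limits
  have hq1 : ∀ n, q n ≤ 1 := fun n => le_trans (hqy n) hy1
  have hq0 : ∀ n, 0 ≤ q n := fun n => by positivity
  have hp0 : ∀ n, 0 ≤ p n := fun n => by positivity
  have hpm : ∀ᶠ n in atTop, p n ∈ Set.Icc (0:ℝ) 1 := by
    have hev2 : ∀ᶠ n in atTop, (1:ℝ)/2^n < y - x := by
      have : Tendsto (fun n : ℕ => (1:ℝ)/2^n) atTop (𝓝 0) := by
        simpa [one_div] using tendsto_pow_atTop_nhds_zero_of_lt_one
          (by norm_num : (0:ℝ) ≤ 1/2) (by norm_num : (1:ℝ)/2 < 1) |>.congr (fun n => by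
            rw [div_pow]; norm_num)
      exact this.eventually_lt_const (by linarith)
    filter_upwards [hev2] with n hn
    refine ⟨hp0 n, ?_⟩
    calc p n ≤ x + 1/2^n := hpb n
    _ ≤ y := by linarith
    _ ≤ 1 := hy1
  have htRp : Tendsto (fun n => R (p n)) atTop (𝓝 (R x)) := by
    apply ((hcont x hx).tendsto).comp
    rw [tendsto_nhdsWithin_iff]
    exact ⟨htp, hpm⟩
  have htRq : Tendsto (fun n => R (q n)) atTop (𝓝 (R y)) := by
    apply ((hcont y hy).tendsto).comp
    rw [tendsto_nhdsWithin_iff]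
    exact ⟨htq, Eventually.of_forall (fun n => ⟨hq0 n, hq1 n⟩)⟩
  exact le_of_tendsto_of_tendsto htRp htRq hev

noncomputable def cc (n : ℕ) : ℝ := 1/(2^n * n^2)

lemma cc_pos {n : ℕ} (hn : 1 ≤ n) : 0 < cc n := by
  have : (0:ℝ) < n := by exact_mod_cast hn
  unfold cc; positivity

lemma deriv_zero {R : ℝ → ℝ} {ρ : ℝ} (hρ0 : 0 < ρ) (hρ1 : ρ < 1)
    (hmono : MonotoneOn R (Set.Icc (0:ℝ) 1)) {x : ℝ} (hx : x ∈ Set.Ioo (0:ℝ) 1)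
    (hgood : ∀ᶠ n in atTop, Δ R n ⌊2^n * x⌋₊ ≤ (ρ/2)^n ∧
      ∀ k : ℕ, k ≤ 2^n → cc n ≤ |x - (k:ℝ)/2^n|) :
    HasDerivAt R 0 x := by
  rw [hasDerivAt_iff_tendsto_slope, Metric.tendsto_nhdsWithin_nhds]
  intro ε hε
  -- the rate sequence tends to zero
  have hsum : Summable (fun n : ℕ => 2*((n:ℝ)+1)^2*ρ^n) := by
    have h0 : Summable (fun n : ℕ => (n:ℝ)^2 * ρ^n) := by
      simpa using summable_pow_mul_geometric_of_norm_lt_one 2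
        (by rw [Real.norm_eq_abs, abs_of_pos hρ0]; exact hρ1)
    have h1 : Summable (fun n : ℕ => ((n:ℝ)+1)^2 * ρ^(n+1)) := by
      have := (summable_nat_add_iff 1).mpr h0
      simpa [pow_succ] using this.congr (fun n => by push_cast; ring)
    have h2 := h1.mul_left (2/ρ)
    refine h2.congr (fun n => ?_)
    field_simp [pow_succ]
    ring
  have hT : Tendsto (fun n : ℕ => 2*((n:ℝ)+1)^2*ρ^n) atTop (𝓝 0) :=
    hsum.tendsto_atTop_zero
  obtain ⟨n₁, hn₁⟩ := (hT.eventually_lt_const hε).exists_forall_of_atTop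
  obtain ⟨N, hN⟩ := hgood.exists_forall_of_atTop
  set n₀ := max n₁ (max N 1) with hn₀
  have hn₀1 : 1 ≤ n₀ := le_max_of_le_right (le_max_right _ _)
  refine ⟨cc n₀, cc_pos hn₀1, ?_⟩
  intro y hy hdist
  have hyx : y ≠ x := hy
  have hd0 : 0 < |y - x| := by
    rw [abs_pos, sub_ne_zero]; exact hyx
  rw [Real.dist_eq] at hdist
  -- find the right scale n
  have hex : ∃ j : ℕ, cc (n₀ + j + 1) ≤ |y - x| := by
    have : Tendsto (fun m : ℕ => (1:ℝ)/2^m) atTop (𝓝 0) := by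
      simpa [one_div] using (tendsto_pow_atTop_nhds_zero_of_lt_one
        (by norm_num : (0:ℝ) ≤ 1/2) (by norm_num : (1:ℝ)/2 < 1)).congr (fun n => by
          rw [div_pow]; norm_num)
    obtain ⟨m, hm⟩ := (this.eventually_le_const hd0).exists_forall_of_atTop
    refine ⟨m, ?_⟩
    have h1 : cc (n₀ + m + 1) ≤ 1/2^(n₀ + m + 1) := by
      unfold cc
      rw [div_le_div_iff₀ (by positivity) (by positivity)]
      have : (1:ℝ) ≤ ((n₀ + m + 1 : ℕ):ℝ)^2 := by
        have : (1:ℝ) ≤ ((n₀ + m + 1 : ℕ):ℝ) := by exact_mod_cast Nat.le_add_left 1 _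
        nlinarith
      nlinarith [pow_pos (by norm_num : (0:ℝ) < 2) (n₀+m+1)]
    exact h1.trans (hm _ (by omega))
  set j := Nat.find hex with hj
  set n := n₀ + j with hndef
  have hcn1 : cc (n+1) ≤ |y - x| := Nat.find_spec hex
  have hcn : |y - x| < cc n := by
    rcases Nat.eq_zero_or_pos j with h0 | h0
    · rw [hndef, h0]; simpa using hdist
    · have := Nat.find_min hex (m := j - 1) (by omega)
      push_neg at this
      have he : n₀ + (j-1) + 1 = n := by omega
      rwa [he] at this
  have hnN : N ≤ n := by omega
  have hn1 : 1 ≤ n := by omega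
  obtain ⟨hΔb, hcb⟩ := hN n hnN
  -- dyadic interval around x
  set k := ⌊2^n * x⌋₊ with hk
  have h2n : (0:ℝ) < 2^n := by positivity
  have hklt : k < 2^n := by
    rw [hk, Nat.floor_lt (mul_nonneg h2n.le hx.1.le)]
    calc (2:ℝ)^n * x < 2^n * 1 := by
          have := hx.2; nlinarith
    _ = ((2^n : ℕ) : ℝ) := by push_cast; ring
  have hxlo : (k:ℝ)/2^n ≤ x := by
    rw [div_le_iff₀ h2n]
    calc (k:ℝ) ≤ 2^n * x := Nat.floor_le (mul_nonneg h2n.le hx.1.le)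
    _ = x * 2^n := by ring
  have hxhi : x < ((k:ℝ)+1)/2^n := by
    rw [lt_div_iff₀ h2n]
    calc x * 2^n = 2^n * x := by ring
    _ < (k:ℝ)+1 := Nat.lt_floor_add_one _
  -- distances to the two endpoints
  have hd1 : cc n ≤ x - (k:ℝ)/2^n := by
    have := hcb k (by omega)
    rwa [abs_of_nonneg (by linarith)] at this
  have hd2 : cc n ≤ ((k:ℝ)+1)/2^n - x := by
    have := hcb (k+1) (by omega)
    have he : ((k+1:ℕ):ℝ) = (k:ℝ)+1 := by push_cast; ring
    rw [he] at this
    rwa [abs_of_nonpos (by linarith), neg_sub] at this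
  -- y lies in the same dyadic interval
  have hylo : (k:ℝ)/2^n ≤ y := by
    have : x - y ≤ |y - x| := by rw [abs_sub_comm]; exact le_abs_self _
    linarith
  have hyhi : y ≤ ((k:ℝ)+1)/2^n := by
    have : y - x ≤ |y - x| := le_abs_self _
    linarith
  -- interval inside [0,1]
  have hI0 : (0:ℝ) ≤ (k:ℝ)/2^n := by positivity
  have hI1 : ((k:ℝ)+1)/2^n ≤ 1 := by
    rw [div_le_one h2n]
    have : (k:ℝ)+1 ≤ ((2^n : ℕ):ℝ) := by exact_mod_cast Nat.succ_le_of_lt hklt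
    calc (k:ℝ)+1 ≤ ((2^n:ℕ):ℝ) := this
    _ = 2^n := by push_cast; ring
  have hmemx : x ∈ Set.Icc (0:ℝ) 1 := ⟨hx.1.le, hx.2.le⟩
  have hmemy : y ∈ Set.Icc (0:ℝ) 1 := ⟨by linarith, by linarith⟩
  have hmemlo : ((k:ℝ)/2^n) ∈ Set.Icc (0:ℝ) 1 := ⟨hI0, by linarith⟩
  have hmemhi : (((k:ℝ)+1)/2^n) ∈ Set.Icc (0:ℝ) 1 := ⟨by positivity, hI1⟩
  -- |R y - R x| ≤ Δ
  have hRb : |R y - R x| ≤ Δ R n k := by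
    have h1 := hmono hmemlo hmemy hylo
    have h2 := hmono hmemy hmemhi hyhi
    have h3 := hmono hmemlo hmemx hxlo
    have h4 := hmono hmemx hmemhi hxhi.le
    rw [abs_le, Δ]
    constructor <;> linarith
  -- conclude
  rw [Real.dist_eq, sub_zero]
  have hsl : |slope R x y| = |R y - R x| / |y - x| := by
    rw [slope_def_field, abs_div]
  rw [hsl]
  have hc1 : (0:ℝ) < cc (n+1) := cc_pos (by omega)
  have hfin : |R y - R x| / |y - x| ≤ 2*((n:ℝ)+1)^2*ρ^n := by
    have hstep : |R y - R x| / |y - x| ≤ (ρ/2)^n / cc (n+1) :=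
      div_le_div₀ (by positivity) (hRb.trans hΔb) hc1 hcn1
    refine hstep.trans_eq ?_
    have hne : ((n:ℝ)+1) ≠ 0 := by positivity
    unfold cc
    rw [div_div_eq_mul_div, div_pow, pow_succ]
    push_cast
    field_simp
  calc |R y - R x| / |y - x| ≤ 2*((n:ℝ)+1)^2*ρ^n := hfin
  _ < ε := hn₁ n (by omega)

section Measures

variable {a : ℝ} {R : ℝ → ℝ}

/-- bad set of type 1 at scale n -/
noncomputable def B1 (R : ℝ → ℝ) (ρ : ℝ) (n : ℕ) : Set ℝ :=
  ⋃ k ∈ (Finset.range (2^n)).filter (fun k => (ρ/2)^n < Δ R n k),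
    Ico ((k:ℝ)/2^n) (((k:ℝ)+1)/2^n)

noncomputable def B2 (n : ℕ) : Set ℝ :=
  ⋃ k ∈ Finset.range (2^n + 1), Metric.ball ((k:ℝ)/2^n) (cc n)

lemma sqrt_pow_aux {x : ℝ} (hx : 0 ≤ x) (n : ℕ) :
    Real.sqrt (x^n) = (Real.sqrt x)^n := by
  induction n with
  | zero => simp
  | succ n ih => rw [pow_succ, pow_succ, Real.sqrt_mul (by positivity), ih]

lemma B1_meas (hR : IsDeRham a R) (ha0 : 0 < a) (ha1 : a < 1)
    {ρ : ℝ} (hρ : 0 < ρ) (n : ℕ) :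
    volume (B1 R ρ n) ≤
      ENNReal.ofReal (((Real.sqrt a + Real.sqrt (1-a)) / 2 / Real.sqrt (ρ/2))^n) := by
  classical
  set s := Real.sqrt a + Real.sqrt (1-a) with hs
  set F := (Finset.range (2^n)).filter (fun k => (ρ/2)^n < Δ R n k) with hF
  have h2n : (0:ℝ) < 2^n := by positivity
  have hstep : volume (B1 R ρ n) ≤ ∑ k ∈ F, ENNReal.ofReal (1/2^n) := by
    refine (measure_biUnion_finset_le F _).trans ?_
    refine Finset.sum_le_sum (fun k _ => ?_)
    rw [Real.volume_Ico]
    apply ENNReal.ofReal_le_ofReal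
    rw [div_sub_div_same]
    norm_num
  refine hstep.trans ?_
  rw [← ENNReal.ofReal_sum_of_nonneg (fun i _ => by positivity)]
  apply ENNReal.ofReal_le_ofReal
  have htpos : (0:ℝ) < (ρ/2)^n := by positivity
  have hsq : (0:ℝ) < Real.sqrt ((ρ/2)^n) := Real.sqrt_pos.mpr htpos
  have hterm : ∀ k ∈ F, (1/2^n : ℝ) ≤ (1/2^n) * (Real.sqrt (Δ R n k) / Real.sqrt ((ρ/2)^n)) := by
    intro k hk
    have hΔ : (ρ/2)^n < Δ R n k := (Finset.mem_filter.mp hk).2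
    have h1 : Real.sqrt ((ρ/2)^n) ≤ Real.sqrt (Δ R n k) := Real.sqrt_le_sqrt hΔ.le
    have h2 : (1:ℝ) ≤ Real.sqrt (Δ R n k) / Real.sqrt ((ρ/2)^n) := (one_le_div hsq).mpr h1
    exact le_mul_of_one_le_right (by positivity) h2
  calc ∑ k ∈ F, (1/2^n : ℝ)
      ≤ ∑ k ∈ F, (1/2^n) * (Real.sqrt (Δ R n k) / Real.sqrt ((ρ/2)^n)) :=
        Finset.sum_le_sum hterm
    _ ≤ ∑ k ∈ Finset.range (2^n), (1/2^n) * (Real.sqrt (Δ R n k) / Real.sqrt ((ρ/2)^n)) := by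
        apply Finset.sum_le_sum_of_subset_of_nonneg (Finset.filter_subset _ _)
        intro k _ _
        positivity
    _ = (1/2^n) / Real.sqrt ((ρ/2)^n) * ∑ k ∈ Finset.range (2^n), Real.sqrt (Δ R n k) := by
        rw [Finset.mul_sum]
        congr 1
        ext k
        ring
    _ = (1/2^n) / Real.sqrt ((ρ/2)^n) * s^n := by rw [sum_sqrt hR ha0 ha1]
    _ = (s / 2 / Real.sqrt (ρ/2))^n := by
        rw [sqrt_pow_aux (by positivity : (0:ℝ) ≤ ρ/2)]
        rw [div_pow, div_pow]
        field_simp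

lemma B2_meas (n : ℕ) : volume (B2 n) ≤ ENNReal.ofReal (4/(n:ℝ)^2) := by
  classical
  have h2n : (0:ℝ) < 2^n := by positivity
  have hstep : volume (B2 n) ≤ ∑ _k ∈ Finset.range (2^n + 1), ENNReal.ofReal (2 * cc n) := by
    refine (measure_biUnion_finset_le _ _).trans ?_
    refine Finset.sum_le_sum (fun k _ => ?_)
    rw [Real.volume_ball]
  refine hstep.trans ?_
  rw [← ENNReal.ofReal_sum_of_nonneg (fun i _ => by unfold cc; positivity)]
  apply ENNReal.ofReal_le_ofReal
  rw [Finset.sum_const, nsmul_eq_mul, Finset.card_range]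
  rcases Nat.eq_zero_or_pos n with rfl | hn
  · norm_num [cc]
  have hnR : (0:ℝ) < (n:ℝ) := by exact_mod_cast hn
  unfold cc
  have e1 : ((2^n + 1:ℕ):ℝ) * (2 * (1/(2^n * (n:ℝ)^2))) = (((2:ℝ)^n+1)*2)/(2^n*(n:ℝ)^2) := by
    push_cast; ring
  have e2 : (4:ℝ)/(n:ℝ)^2 = (4*2^n)/(2^n*(n:ℝ)^2) := by
    field_simp
  rw [e1, e2, div_le_div_iff_of_pos_right (by positivity)]
  have h1 : (1:ℝ) ≤ 2^n := one_le_pow₀ (by norm_num)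
  nlinarith

end Measures


section Main

variable {a : ℝ} {R : ℝ → ℝ}

lemma floor_facts {x : ℝ} (hx : x ∈ Set.Ioo (0:ℝ) 1) (n : ℕ) :
    ⌊2^n * x⌋₊ < 2^n ∧ ((⌊2^n * x⌋₊:ℝ)/2^n ≤ x ∧ x < ((⌊2^n * x⌋₊:ℝ)+1)/2^n) := by
  have h2n : (0:ℝ) < 2^n := by positivity
  have hnn : (0:ℝ) ≤ 2^n * x := mul_nonneg h2n.le hx.1.le
  refine ⟨?_, ?_, ?_⟩
  · rw [Nat.floor_lt hnn]
    calc (2:ℝ)^n * x < 2^n * 1 := by nlinarith [hx.2]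
    _ = ((2^n : ℕ) : ℝ) := by push_cast; ring
  · rw [div_le_iff₀ h2n]
    calc ((⌊2^n * x⌋₊:ℕ):ℝ) ≤ 2^n * x := Nat.floor_le hnn
    _ = x * 2^n := by ring
  · rw [lt_div_iff₀ h2n]
    calc x * 2^n = 2^n * x := by ring
    _ < (⌊2^n * x⌋₊:ℝ)+1 := Nat.lt_floor_add_one _

theorem isSingular (ha0 : 0 < a) (ha1 : a < 1) (hne : a ≠ 1/2) (hR : IsDeRham a R) :
    IsSingularFunction R := by
  have hmono : MonotoneOn R (Set.Icc (0:ℝ) 1) :=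
    mono_of_dyadic hR.1 (fun n l hl k hk => dyadic_mono hR ha0 ha1 n l hl k hk)
  set s := Real.sqrt a + Real.sqrt (1-a) with hsdef
  have hs0 : 0 < s := by
    have : 0 < Real.sqrt a := Real.sqrt_pos.mpr ha0
    have : 0 ≤ Real.sqrt (1-a) := Real.sqrt_nonneg _
    unfold s; linarith
  have hs2 : s^2 < 2 := by
    have hA : Real.sqrt a ^ 2 = a := Real.sq_sqrt ha0.le
    have hB : Real.sqrt (1-a) ^ 2 = 1-a := Real.sq_sqrt (by linarith)
    have hab : Real.sqrt a * Real.sqrt (1-a) = Real.sqrt (a*(1-a)) :=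
      (Real.sqrt_mul ha0.le _).symm
    have hmul : Real.sqrt (a*(1-a)) < 1/2 := by
      rw [Real.sqrt_lt' (by norm_num)]
      have : a - 1/2 ≠ 0 := sub_ne_zero.mpr hne
      nlinarith [pow_two_pos_of_ne_zero this]
    unfold s
    nlinarith
  set ρ := (s^2 + 2)/4 with hρdef
  have hρ0 : 0 < ρ := by unfold ρ; nlinarith
  have hρ1 : ρ < 1 := by unfold ρ; nlinarith
  set q := s / 2 / Real.sqrt (ρ/2) with hqdef
  have hsq2 : 0 < Real.sqrt (ρ/2) := Real.sqrt_pos.mpr (by positivity)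
  have hq0 : 0 ≤ q := by positivity
  have hq1 : q < 1 := by
    unfold q
    rw [div_lt_one hsq2]
    rw [Real.lt_sqrt (by positivity)]
    unfold ρ
    nlinarith
  refine ⟨hR.1, hR.2.1, hR.2.2.1, hmono, ?_⟩
  -- Borel-Cantelli
  have htsum : (∑' n, volume (B1 R ρ n ∪ B2 n)) ≠ ⊤ := by
    have hb : ∀ n : ℕ, volume (B1 R ρ n ∪ B2 n) ≤
        ENNReal.ofReal (q^n) + ENNReal.ofReal (4/(n:ℝ)^2) := fun n =>
      (measure_union_le _ _).trans (add_le_add (B1_meas hR ha0 ha1 hρ0 n) (B2_meas n))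
    have hS1 : Summable (fun n : ℕ => q^n) := summable_geometric_of_lt_one hq0 hq1
    have hS2 : Summable (fun n : ℕ => 4/(n:ℝ)^2) := by
      have := (Real.summable_one_div_nat_pow (p := 2)).mpr (by norm_num)
      exact (this.mul_left 4).congr (fun n => by ring)
    have : (∑' n : ℕ, volume (B1 R ρ n ∪ B2 n)) ≤
        (∑' n : ℕ, ENNReal.ofReal (q^n)) + ∑' n : ℕ, ENNReal.ofReal (4/(n:ℝ)^2) := by
      rw [← ENNReal.tsum_add]
      exact ENNReal.tsum_le_tsum hb
    refine ne_top_of_le_ne_top ?_ this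
    rw [← ENNReal.ofReal_tsum_of_nonneg (fun n => by positivity) hS1,
      ← ENNReal.ofReal_tsum_of_nonneg (fun n => by positivity) hS2]
    exact ENNReal.add_ne_top.mpr ⟨ENNReal.ofReal_ne_top, ENNReal.ofReal_ne_top⟩
  have hBC : volume (limsup (fun n => B1 R ρ n ∪ B2 n) atTop) = 0 :=
    measure_limsup_atTop_eq_zero htsum
  have h1 : ∀ᵐ x ∂(volume.restrict (Set.Icc (0:ℝ) 1)),
      x ∉ limsup (fun n => B1 R ρ n ∪ B2 n) atTop := by
    rw [ae_iff]
    have hset : {x : ℝ | ¬ x ∉ limsup (fun n => B1 R ρ n ∪ B2 n) atTop}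
        = limsup (fun n => B1 R ρ n ∪ B2 n) atTop := by ext z; simp
    rw [hset]
    exact le_antisymm ((Measure.restrict_apply_le _ _).trans hBC.le) zero_le
  have h2 : ∀ᵐ x ∂(volume.restrict (Set.Icc (0:ℝ) 1)), x ∈ Set.Ioo (0:ℝ) 1 := by
    rw [ae_iff]
    have hset : {x : ℝ | ¬ x ∈ Set.Ioo (0:ℝ) 1} = (Set.Ioo (0:ℝ) 1)ᶜ := rfl
    rw [hset, Measure.restrict_apply measurableSet_Ioo.compl]
    refine measure_mono_null (?_ : _ ⊆ ({0, 1} : Set ℝ)) ?_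
    · rintro z ⟨hz1, hz2⟩
      simp only [Set.mem_compl_iff, Set.mem_Ioo, not_and_or, not_lt] at hz1
      simp only [Set.mem_insert_iff, Set.mem_singleton_iff]
      rcases hz1 with h | h
      · left; linarith [hz2.1]
      · right; linarith [hz2.2]
    · exact ((Set.finite_singleton (1:ℝ)).insert 0).measure_zero _
  filter_upwards [h1, h2] with x hx1 hx2
  apply deriv_zero hρ0 hρ1 hmono hx2
  rw [Filter.mem_limsup_iff_frequently_mem, Filter.not_frequently] at hx1
  filter_upwards [hx1] with n hn
  have hnB1 : x ∉ B1 R ρ n := fun h => hn (Or.inl h)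
  have hnB2 : x ∉ B2 n := fun h => hn (Or.inr h)
  obtain ⟨hfl, hflo, hfhi⟩ := floor_facts hx2 n
  constructor
  · by_contra hcon
    push_neg at hcon
    apply hnB1
    simp only [B1, Set.mem_iUnion]
    exact ⟨⌊2^n * x⌋₊, Finset.mem_filter.mpr ⟨Finset.mem_range.mpr hfl, hcon⟩, hflo, hfhi⟩
  · intro k hk
    by_contra hcon
    push_neg at hcon
    apply hnB2
    simp only [B2, Set.mem_iUnion]
    exact ⟨k, Finset.mem_range.mpr (by omega),
      by rw [Metric.mem_ball, Real.dist_eq]; exact hcon⟩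

end Main


section Existence

variable {a : ℝ}

noncomputable def T (a : ℝ) (f : ℝ → ℝ) : ℝ → ℝ :=
  fun x => if x < 1/2 then a * f (2*x) else (1-a) * f (2*x-1) + a

noncomputable def seqF (a : ℝ) (n : ℕ) : ℝ → ℝ := (T a)^[n] id

noncomputable def R0 (a : ℝ) : ℝ → ℝ := fun x => limUnder atTop (fun n => seqF a n x)

lemma seqF_succ (n : ℕ) : seqF a (n+1) = T a (seqF a n) := by
  unfold seqF
  rw [Function.iterate_succ_apply']

lemma seqF_zero_pt (n : ℕ) : seqF a n 0 = 0 := by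
  induction n with
  | zero => rfl
  | succ n ih => rw [seqF_succ]; norm_num [T, ih]

lemma seqF_one_pt (n : ℕ) : seqF a n 1 = 1 := by
  induction n with
  | zero => rfl
  | succ n ih => rw [seqF_succ]; norm_num [T, ih]

lemma seqF_mem (ha0 : 0 < a) (ha1 : a < 1) (n : ℕ) :
    ∀ x ∈ Set.Icc (0:ℝ) 1, seqF a n x ∈ Set.Icc (0:ℝ) 1 := by
  induction n with
  | zero => intro x hx; exact hx
  | succ n ih =>
    intro x hx
    rw [seqF_succ]
    unfold T
    split_ifs with h
    · have h2 : 2*x ∈ Set.Icc (0:ℝ) 1 := ⟨by linarith [hx.1], by linarith⟩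
      obtain ⟨l, r⟩ := ih _ h2
      constructor <;> nlinarith
    · push_neg at h
      have h2 : 2*x-1 ∈ Set.Icc (0:ℝ) 1 := ⟨by linarith, by linarith [hx.2]⟩
      obtain ⟨l, r⟩ := ih _ h2
      constructor <;> nlinarith

lemma T_contract (ha0 : 0 < a) (ha1 : a < 1) {f g : ℝ → ℝ} {C : ℝ}
    (h : ∀ y ∈ Set.Icc (0:ℝ) 1, |f y - g y| ≤ C) :
    ∀ x ∈ Set.Icc (0:ℝ) 1, |T a f x - T a g x| ≤ max a (1-a) * C := by
  intro x hx
  have hm : a ≤ max a (1-a) := le_max_left _ _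
  have hm' : 1-a ≤ max a (1-a) := le_max_right _ _
  have hm0 : 0 < max a (1-a) := lt_of_lt_of_le ha0 hm
  unfold T
  split_ifs with hc
  · have h2 : 2*x ∈ Set.Icc (0:ℝ) 1 := ⟨by linarith [hx.1], by linarith⟩
    have hb := h _ h2
    have hC0 : 0 ≤ C := le_trans (abs_nonneg _) hb
    rw [← mul_sub, abs_mul, abs_of_pos ha0]
    nlinarith [abs_nonneg (f (2*x) - g (2*x))]
  · push_neg at hc
    have h2 : 2*x-1 ∈ Set.Icc (0:ℝ) 1 := ⟨by linarith, by linarith [hx.2]⟩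
    have hb := h _ h2
    have hC0 : 0 ≤ C := le_trans (abs_nonneg _) hb
    have he : (1 - a) * f (2*x-1) + a - ((1 - a) * g (2*x-1) + a)
        = (1-a) * (f (2*x-1) - g (2*x-1)) := by ring
    rw [he, abs_mul, abs_of_pos (by linarith : (0:ℝ) < 1-a)]
    nlinarith [abs_nonneg (f (2*x-1) - g (2*x-1))]

lemma seqF_dist (ha0 : 0 < a) (ha1 : a < 1) (n : ℕ) :
    ∀ x ∈ Set.Icc (0:ℝ) 1, |seqF a (n+1) x - seqF a n x| ≤ (max a (1-a))^n := by
  induction n with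
  | zero =>
    intro x hx
    obtain ⟨l1, r1⟩ := seqF_mem ha0 ha1 1 x hx
    obtain ⟨l0, r0⟩ := hx
    have e0 : seqF a (0+1) x = seqF a 1 x := by norm_num
    have e1 : seqF a 0 x = x := rfl
    rw [pow_zero, abs_le, e0, e1]
    constructor <;> linarith
  | succ n ih =>
    intro x hx
    have hkey := T_contract ha0 ha1 ih x hx
    calc |seqF a (n+1+1) x - seqF a (n+1) x|
        = |T a (seqF a (n+1)) x - T a (seqF a n) x| := by
          rw [seqF_succ (n+1), seqF_succ n]
      _ ≤ max a (1-a) * (max a (1-a))^n := hkey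
      _ = (max a (1-a))^(n+1) := by rw [pow_succ]; ring

lemma seqF_tendsto (ha0 : 0 < a) (ha1 : a < 1) {x : ℝ} (hx : x ∈ Set.Icc (0:ℝ) 1) :
    Tendsto (fun n => seqF a n x) atTop (𝓝 (R0 a x)) := by
  have hm1 : max a (1-a) < 1 := max_lt ha1 (by linarith)
  have hc : CauchySeq (fun n => seqF a n x) := by
    apply cauchySeq_of_le_geometric (max a (1-a)) 1 hm1
    intro n
    rw [Real.dist_eq, abs_sub_comm, one_mul]
    exact seqF_dist ha0 ha1 n x hx
  obtain ⟨l, hl⟩ := cauchySeq_tendsto_of_complete hc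
  have : R0 a x = l := hl.limUnder_eq
  rwa [this]

lemma seqF_unif (ha0 : 0 < a) (ha1 : a < 1) :
    TendstoUniformlyOn (seqF a) (R0 a) atTop (Set.Icc (0:ℝ) 1) := by
  set m := max a (1-a) with hm
  have hm1 : m < 1 := max_lt ha1 (by linarith)
  have hm0 : 0 < m := lt_of_lt_of_le ha0 (le_max_left _ _)
  rw [Metric.tendstoUniformlyOn_iff]
  intro ε hε
  have hb : ∀ n, ∀ x ∈ Set.Icc (0:ℝ) 1, dist (seqF a n x) (R0 a x) ≤ 1 * m^n / (1-m) := by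
    intro n x hx
    apply dist_le_of_le_geometric_of_tendsto m 1 hm1
      (fun k => by rw [Real.dist_eq, abs_sub_comm, one_mul]; exact seqF_dist ha0 ha1 k x hx)
      (seqF_tendsto ha0 ha1 hx)
  have ht : Tendsto (fun n : ℕ => 1 * m^n / (1-m)) atTop (𝓝 0) := by
    have := (tendsto_pow_atTop_nhds_zero_of_lt_one hm0.le hm1).div_const (1-m)
    simpa using this
  filter_upwards [ht.eventually_lt_const hε] with n hn x hx
  rw [dist_comm]
  exact lt_of_le_of_lt (hb n x hx) hn

lemma seqF_contOn (ha0 : 0 < a) (ha1 : a < 1) (n : ℕ) :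
    ContinuousOn (seqF a n) (Set.Icc (0:ℝ) 1) := by
  induction n with
  | zero => exact continuousOn_id
  | succ n ih =>
    rw [seqF_succ]
    unfold T
    apply ContinuousOn.if
    · intro x hx
      have hfr : x = 1/2 := by
        have := hx.2
        rw [(by rfl : {x : ℝ | x < 1/2} = Set.Iio (1/2)), frontier_Iio] at this
        simpa using this
      subst hfr
      norm_num [seqF_zero_pt, seqF_one_pt]
    · rw [(by rfl : {x : ℝ | x < 1/2} = Set.Iio (1/2)), closure_Iio]
      apply ContinuousOn.mul continuousOn_const
      apply ih.comp ((continuous_const.mul continuous_id).continuousOn)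
      intro x hx
      obtain ⟨⟨h1, _⟩, h3⟩ := hx
      simp only [Set.mem_Iic] at h3
      exact ⟨by simpa using by linarith, by simpa using by linarith⟩
    · have hset : {x : ℝ | ¬ x < 1/2} = Set.Ici (1/2) := by
        ext z; simp [not_lt]
      rw [hset, closure_Ici]
      apply ContinuousOn.add _ continuousOn_const
      apply ContinuousOn.mul continuousOn_const
      apply ih.comp (((continuous_const.mul continuous_id).sub continuous_const).continuousOn)
      intro x hx
      obtain ⟨⟨_, h2⟩, h3⟩ := hx
      simp only [Set.mem_Ici] at h3
      exact ⟨by simpa using by linarith, by simpa using by linarith⟩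

lemma R0_isDeRham (ha0 : 0 < a) (ha1 : a < 1) : IsDeRham a (R0 a) := by
  have h0m : (0:ℝ) ∈ Set.Icc (0:ℝ) 1 := by norm_num
  have h1m : (1:ℝ) ∈ Set.Icc (0:ℝ) 1 := by norm_num
  refine ⟨?_, ?_, ?_, ?_, ?_⟩
  · exact (seqF_unif ha0 ha1).continuousOn
      (Filter.Eventually.of_forall (seqF_contOn ha0 ha1)).frequently
  · refine tendsto_nhds_unique (seqF_tendsto ha0 ha1 h0m) ?_
    simpa [seqF_zero_pt] using (tendsto_const_nhds : Tendsto (fun _ : ℕ => (0:ℝ)) atTop _)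
  · refine tendsto_nhds_unique (seqF_tendsto ha0 ha1 h1m) ?_
    simpa [seqF_one_pt] using (tendsto_const_nhds : Tendsto (fun _ : ℕ => (1:ℝ)) atTop _)
  · intro x hx0 hxlt
    have hx : x ∈ Set.Icc (0:ℝ) 1 := ⟨hx0, by linarith⟩
    have h2x : 2*x ∈ Set.Icc (0:ℝ) 1 := ⟨by linarith, by linarith⟩
    have h1 : Tendsto (fun n => seqF a (n+1) x) atTop (𝓝 (R0 a x)) :=
      (seqF_tendsto ha0 ha1 hx).comp (tendsto_add_atTop_nat 1)
    have h2 : (fun n => seqF a (n+1) x) = fun n => a * seqF a n (2*x) := by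
      funext n
      rw [seqF_succ]
      unfold T
      rw [if_pos hxlt]
    rw [h2] at h1
    exact tendsto_nhds_unique h1 ((seqF_tendsto ha0 ha1 h2x).const_mul a)
  · intro x hxge hxle
    have hx : x ∈ Set.Icc (0:ℝ) 1 := ⟨by linarith, hxle⟩
    have h2x : 2*x-1 ∈ Set.Icc (0:ℝ) 1 := ⟨by linarith, by linarith⟩
    have h1 : Tendsto (fun n => seqF a (n+1) x) atTop (𝓝 (R0 a x)) :=
      (seqF_tendsto ha0 ha1 hx).comp (tendsto_add_atTop_nat 1)
    have h2 : (fun n => seqF a (n+1) x) = fun n => (1-a) * seqF a n (2*x-1) + a := by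
      funext n
      rw [seqF_succ]
      unfold T
      rw [if_neg (not_lt.mpr hxge)]
    rw [h2] at h1
    exact tendsto_nhds_unique h1 (((seqF_tendsto ha0 ha1 h2x).const_mul (1-a)).add_const a)

end Existence

end Stmt19aux

/-- a singular function exists; in particular, De Rham's
function `R_a` for `a ∈ (0,1)`, `a ≠ 1/2`, is a singular function. -/
theorem stmt19 :
    (∃ f : ℝ → ℝ, IsSingularFunction f) ∧
    (∀ a : ℝ, 0 < a → a < 1 → a ≠ 1/2 →
      ∀ R : ℝ → ℝ, IsDeRham a R → IsSingularFunction R) := by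
  have h2 : ∀ a : ℝ, 0 < a → a < 1 → a ≠ 1/2 →
      ∀ R : ℝ → ℝ, IsDeRham a R → IsSingularFunction R :=
    fun a ha0 ha1 hne R hR => Stmt19aux.isSingular ha0 ha1 hne hR
  refine ⟨⟨Stmt19aux.R0 (1/3), h2 (1/3) (by norm_num) (by norm_num) (by norm_num) _
      (Stmt19aux.R0_isDeRham (by norm_num) (by norm_num))⟩, h2⟩
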